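/- If two graded bialgebras (A, Δ_A) and (B, Δ_B) are in cointeraction via a coaction ρ: A → B ⊗ A, and α is a character of B while a, b are linear functionals on A, then defining α ⋆ a = (α ⊗ a) ∘ ρ and the convolution a ⋆_A b = (a ⊗ b) ∘ Δ_A, one has α ⋆ (a ⋆_A b) = (α ⋆ a) ⋆_A (α ⋆ b). -/

import Mathlib

open scoped TensorProduct

/-- The map `m_B^{1,3} : (B ⊗ A) ⊗ (B ⊗ A) → B ⊗ (A ⊗ A)`,
`a ⊗ b ⊗ c ⊗ d ↦ a·_B c ⊗ b ⊗ d`. -/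
noncomputable def m13 (K A B : Type*) [CommRing K] [Ring A] [Algebra K A]
    [Ring B] [Algebra K B] :
    (B ⊗[K] A) ⊗[K] (B ⊗[K] A) →ₗ[K] B ⊗[K] (A ⊗[K] A) :=
  (TensorProduct.assoc K B A A).toLinearMap ∘ₗ
  (LinearMap.rTensor A (LinearMap.rTensor A (LinearMap.mul' K B))) ∘ₗ
  (LinearMap.rTensor A (TensorProduct.assoc K B B A).symm.toLinearMap) ∘ₗ
  (LinearMap.rTensor A (LinearMap.lTensor B (TensorProduct.comm K A B).toLinearMap)) ∘ₗ
  (LinearMap.rTensor A (TensorProduct.assoc K B A B).toLinearMap) ∘ₗ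
  (TensorProduct.assoc K (B ⊗[K] A) B A).symm.toLinearMap

/-- The convolution product `a ⋆_A b = (a ⊗ b) ∘ Δ_A` of linear functionals on a
bialgebra `A`. -/
noncomputable def convA {K A : Type*} [Field K] [Ring A] [Bialgebra K A]
    (a b : A →ₗ[K] K) : A →ₗ[K] K :=
  (TensorProduct.lid K K).toLinearMap ∘ₗ TensorProduct.map a b ∘ₗ Coalgebra.comul

/-- The action `α ⋆ a = (α ⊗ a) ∘ ρ` of a functional on `B` on functionals on `A`,
through a coaction `ρ : A → B ⊗ A`. -/
noncomputable def coactStar {K A B : Type*} [Field K] [Ring A] [Bialgebra K A]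
    [Ring B] [Bialgebra K B] (ρ : A →ₗ[K] B ⊗[K] A)
    (α : B →ₗ[K] K) (a : A →ₗ[K] K) : A →ₗ[K] K :=
  (TensorProduct.lid K K).toLinearMap ∘ₗ TensorProduct.map α a ∘ₗ ρ

/-! Evaluate `α ⊗ a ⊗ b` on both sides of `(id ⊗ Δ_A) ρ = m_B^{1,3} (ρ ⊗ ρ) Δ_A`: on
`b₁ ⊗ a₁ ⊗ b₂ ⊗ a₂` the right side gives `α (b₁ b₂) a(a₁) b(a₂)`, which multiplicativity of `α`
splits as `(α(b₁) a(a₁)) (α(b₂) b(a₂))`, i.e. `((α ⋆ a) ⊗ (α ⋆ b)) (ρ ⊗ ρ)`. -/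

open TensorProduct LinearMap

section m13

variable {K A B : Type*} [CommRing K] [Ring A] [Algebra K A] [Ring B] [Algebra K B]

@[simp]
lemma m13_tmul (b₁ b₂ : B) (a₁ a₂ : A) :
    m13 K A B ((b₁ ⊗ₜ[K] a₁) ⊗ₜ[K] (b₂ ⊗ₜ[K] a₂)) = (b₁ * b₂) ⊗ₜ[K] (a₁ ⊗ₜ[K] a₂) := by
  simp [m13, mul'_apply]

lemma lid_map_comp_m13 (α : B →ₗ[K] K) (hαm : ∀ x y : B, α (x * y) = α x * α y)
    (a b : A →ₗ[K] K) :
    (TensorProduct.lid K K).toLinearMap ∘ₗ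
        map α ((TensorProduct.lid K K).toLinearMap ∘ₗ map a b) ∘ₗ m13 K A B =
      (TensorProduct.lid K K).toLinearMap ∘ₗ
        map ((TensorProduct.lid K K).toLinearMap ∘ₗ map α a)
          ((TensorProduct.lid K K).toLinearMap ∘ₗ map α b) := by
  ext b₁ a₁ b₂ a₂
  simp only [AlgebraTensorModule.curry_apply, restrictScalars_self, curry_apply, coe_comp,
    LinearEquiv.coe_coe, Function.comp_apply, m13_tmul, map_tmul, hαm, lid_tmul, smul_eq_mul]
  ring

end m13

theorem cointeraction_star_compat_general {K A B : Type*} [Field K]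
    [Ring A] [Bialgebra K A] [Ring B] [Bialgebra K B]
    (ρ : A →ₗ[K] B ⊗[K] A)
    (hcoact : ∀ x : A,
      (LinearMap.lTensor B (Coalgebra.comul (R := K) (A := A))) (ρ x)
        = m13 K A B ((TensorProduct.map ρ ρ) (Coalgebra.comul x)))
    (α : B →ₗ[K] K) (hαm : ∀ x y : B, α (x * y) = α x * α y)
    (a b : A →ₗ[K] K) :
    coactStar ρ α (convA a b) = convA (coactStar ρ α a) (coactStar ρ α b) := by
  set lidK := (TensorProduct.lid K K).toLinearMap
  have hcoact' : lTensor B Coalgebra.comul ∘ₗ ρ = m13 K A B ∘ₗ map ρ ρ ∘ₗ Coalgebra.comul :=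
    LinearMap.ext hcoact
  calc coactStar ρ α (convA a b)
      = lidK ∘ₗ map α (lidK ∘ₗ map a b) ∘ₗ lTensor B Coalgebra.comul ∘ₗ ρ := by
        rw [← comp_assoc ρ, map_comp_lTensor]; rfl
    _ = (lidK ∘ₗ map α (lidK ∘ₗ map a b) ∘ₗ m13 K A B) ∘ₗ map ρ ρ ∘ₗ Coalgebra.comul := by
        rw [hcoact']; simp only [comp_assoc]
    _ = convA (coactStar ρ α a) (coactStar ρ α b) := by
        rw [lid_map_comp_m13 α hαm, comp_assoc, ← comp_assoc Coalgebra.comul, ← map_comp]; rfl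

/-- If two bialgebras `A` and `B` are in cointeraction via a coaction `ρ : A → B ⊗ A`,
`α` is a character of `B`, and `a`, `b` are linear functionals on `A`, then
`α ⋆ (a ⋆_A b) = (α ⋆ a) ⋆_A (α ⋆ b)`. -/
theorem cointeraction_star_compat {K A B : Type*} [Field K] [CharZero K]
    [Ring A] [Bialgebra K A] [Ring B] [Bialgebra K B]
    (ρ : A →ₗ[K] B ⊗[K] A)
    (hρ1 : ρ 1 = 1 ⊗ₜ[K] 1)
    (hρm : ∀ x y : A, ρ (x * y) = ρ x * ρ y)
    (hcounit : ∀ x : A,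
      (LinearMap.lTensor B (Coalgebra.counit (R := K) (A := A))) (ρ x)
        = Coalgebra.counit (R := K) x • ((1 : B) ⊗ₜ[K] (1 : K)))
    (hcoact : ∀ x : A,
      (LinearMap.lTensor B (Coalgebra.comul (R := K) (A := A))) (ρ x)
        = m13 K A B ((TensorProduct.map ρ ρ) (Coalgebra.comul x)))
    (α : B →ₗ[K] K) (hα1 : α 1 = 1) (hαm : ∀ x y : B, α (x * y) = α x * α y)
    (a b : A →ₗ[K] K) :
    coactStar ρ α (convA a b) = convA (coactStar ρ α a) (coactStar ρ α b) :=
  cointeraction_star_compat_general ρ hcoact α hαm a b
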